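/- arXiv:2103.14511 — 4 statements merged into one kernel-verified Lean document; each statement's English description precedes it below -/
import Mathlib

section
/- Let ρ_1, …, ρ_N be density matrices on ℂ^d, let p ∈ ℝ^N be a probability vector (p_i ≥ 0, Σ_i p_i = 1), and let ρ̄ = Σ_{i=1}^N p_i ρ_i. Then Σ_{i=1}^N p_i D_Tr(ρ_i, ρ̄) ≤ (√d / (2√2)) · ( Σ_{i=1}^N Σ_{j=1}^N p_i p_j D_HS(ρ_i, ρ_j)² )^{1/2}. -/
open Matrix Finset
open scoped ComplexOrder

/-- The trace norm `‖A‖₁ = Tr √(Aᴴ A)` of a complex matrix. -/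
noncomputable def traceNorm {d : ℕ} (A : Matrix (Fin d) (Fin d) ℂ) : ℝ :=
  (((Matrix.posSemidef_conjTranspose_mul_self A).1.eigenvectorUnitary.1 *
      diagonal (((↑) : ℝ → ℂ) ∘ Real.sqrt ∘ (Matrix.posSemidef_conjTranspose_mul_self A).1.eigenvalues) *
      (star (Matrix.posSemidef_conjTranspose_mul_self A).1.eigenvectorUnitary :
        Matrix (Fin d) (Fin d) ℂ)).trace).re

/-- The trace distance `D_Tr(ρ,σ) = ½‖ρ − σ‖₁`. -/
noncomputable def DTr {d : ℕ} (ρ σ : Matrix (Fin d) (Fin d) ℂ) : ℝ :=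
  traceNorm (ρ - σ) / 2

/-- The Hilbert–Schmidt distance `D_HS(ρ,σ) = ‖ρ − σ‖₂ = √(Tr[(ρ−σ)ᴴ(ρ−σ)])`. -/
noncomputable def DHS {d : ℕ} (ρ σ : Matrix (Fin d) (Fin d) ℂ) : ℝ :=
  Real.sqrt (((ρ - σ)ᴴ * (ρ - σ)).trace.re)

/-! The trace norm of `A` is the sum of its singular values `√μᵢ`, where the `μᵢ` are the
eigenvalues of `Aᴴ A`, and `Σ μᵢ = ‖A‖₂²`; so Cauchy–Schwarz gives `‖A‖₁ ≤ √d ‖A‖₂`, i.e.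
`D_Tr ≤ (√d / 2) D_HS`. Cauchy–Schwarz for the probability weights then bounds
`Σ pᵢ D_Tr(ρᵢ, ρ̄)` by `(√d / 2) (Σ pᵢ D_HS(ρᵢ, ρ̄)²)^{1/2}`. Reading a matrix as the vector
of its entries makes `D_HS` a Euclidean distance, and the variance identity
`Σ pᵢ ‖xᵢ - x̄‖² = ½ Σ pᵢ pⱼ ‖xᵢ - xⱼ‖²` for the weighted mean `x̄` finishes the proof. -/

lemma traceNorm_eq_sum_sqrt_eigenvalues {d : ℕ} (A : Matrix (Fin d) (Fin d) ℂ) :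
    traceNorm A = ∑ i, √((posSemidef_conjTranspose_mul_self A).1.eigenvalues i) := by
  rw [traceNorm, trace_mul_cycle, Unitary.coe_star_mul_self, Matrix.one_mul, trace_diagonal]
  simp [Complex.re_sum]

lemma traceNorm_le_sqrt_mul_sqrt_re_trace {d : ℕ} (A : Matrix (Fin d) (Fin d) ℂ) :
    traceNorm A ≤ √d * √((Aᴴ * A).trace.re) := by
  have hAA := posSemidef_conjTranspose_mul_self A
  have htrace : (Aᴴ * A).trace.re = ∑ i, hAA.1.eigenvalues i := by
    simp [hAA.1.trace_eq_sum_eigenvalues, Complex.re_sum]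
  rw [traceNorm_eq_sum_sqrt_eigenvalues, htrace]
  calc ∑ i, √(hAA.1.eigenvalues i) = ∑ i, 1 * √(hAA.1.eigenvalues i) := by simp
    _ ≤ √(∑ i : Fin d, 1 ^ 2) * √(∑ i, √(hAA.1.eigenvalues i) ^ 2) :=
      Real.sum_mul_le_sqrt_mul_sqrt _ _ _
    _ = √d * √(∑ i, hAA.1.eigenvalues i) := by
      simp [Real.sq_sqrt (hAA.eigenvalues_nonneg _)]

lemma DTr_le_sqrt_mul_DHS {d : ℕ} (ρ σ : Matrix (Fin d) (Fin d) ℂ) :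
    DTr ρ σ ≤ √d / 2 * DHS ρ σ := by
  rw [DTr, DHS, div_mul_eq_mul_div]
  gcongr
  exact traceNorm_le_sqrt_mul_sqrt_re_trace _

namespace Matrix

variable {m n 𝕜 : Type*} [RCLike 𝕜]

noncomputable def toEuclideanSpace : Matrix m n 𝕜 →ₗ[𝕜] EuclideanSpace 𝕜 (m × n) where
  toFun A := WithLp.toLp 2 fun ij => A ij.1 ij.2
  map_add' _ _ := rfl
  map_smul' _ _ := rfl

@[simp]
lemma toEuclideanSpace_apply (A : Matrix m n 𝕜) (ij : m × n) : toEuclideanSpace A ij = A ij.1 ij.2 :=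
  rfl

lemma re_trace_conjTranspose_mul_self [Fintype m] [Fintype n] (A : Matrix m n 𝕜) :
    RCLike.re (Aᴴ * A).trace = ‖toEuclideanSpace A‖ ^ 2 := by
  rw [EuclideanSpace.norm_eq, Real.sq_sqrt (by positivity), Fintype.sum_prod_type, sum_comm]
  simp [trace, mul_apply, RCLike.conj_mul]

end Matrix

lemma DHS_eq_norm_sub {d : ℕ} (ρ σ : Matrix (Fin d) (Fin d) ℂ) :
    DHS ρ σ = ‖toEuclideanSpace ρ - toEuclideanSpace σ‖ := by
  rw [DHS, ← RCLike.re_to_complex, re_trace_conjTranspose_mul_self, map_sub,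
    Real.sqrt_sq (norm_nonneg _)]

theorem sum_mul_norm_sub_sum_smul_sq {𝕜 E ι : Type*} [RCLike 𝕜] [NormedAddCommGroup E]
    [InnerProductSpace 𝕜 E] [Fintype ι] (x : ι → E) (p : ι → ℝ) (hp : ∑ i, p i = 1) :
    ∑ i, p i * ‖x i - ∑ j, (p j : 𝕜) • x j‖ ^ 2
      = (∑ i, ∑ j, p i * p j * ‖x i - x j‖ ^ 2) / 2 := by
  set m := ∑ j, (p j : 𝕜) • x j
  have hcentered : ∑ i, (p i : 𝕜) • (x i - m) = 0 := by
    simp [smul_sub, sum_sub_distrib, ← sum_smul, m, ← RCLike.ofReal_sum, hp]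
  have hcross : ∑ i, ∑ j, p i * p j * RCLike.re (inner 𝕜 (x i - m) (x j - m)) = 0 := by
    calc ∑ i, ∑ j, p i * p j * RCLike.re (inner 𝕜 (x i - m) (x j - m))
        = RCLike.re (inner 𝕜 (∑ i, (p i : 𝕜) • (x i - m)) (∑ j, (p j : 𝕜) • (x j - m))) := by
          rw [sum_comm]
          simp only [sum_inner, inner_sum, inner_smul_left, inner_smul_right, RCLike.conj_ofReal,
            map_sum, RCLike.re_ofReal_mul, mul_sum]
          exact sum_congr rfl fun _ _ => sum_congr rfl fun _ _ => by ring
      _ = 0 := by rw [hcentered, inner_zero_left, map_zero]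
  have hexpand : ∀ i j, p i * p j * ‖x i - x j‖ ^ 2 = p j * (p i * ‖x i - m‖ ^ 2)
      + p i * (p j * ‖x j - m‖ ^ 2) - 2 * (p i * p j * RCLike.re (inner 𝕜 (x i - m) (x j - m))) := by
    intro i j
    rw [← sub_sub_sub_cancel_right (x i) (x j) m, norm_sub_sq (𝕜 := 𝕜)]
    ring
  simp only [hexpand, sum_add_distrib, sum_sub_distrib, ← mul_sum, ← sum_mul, hp, hcross]
  ring

lemma sum_mul_le_sqrt_sum_mul_sq {ι : Type*} [Fintype ι] (p a : ι → ℝ) (hp : ∀ i, 0 ≤ p i)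
    (hps : ∑ i, p i = 1) : ∑ i, p i * a i ≤ √(∑ i, p i * a i ^ 2) := by
  refine (le_abs_self _).trans (Real.abs_le_sqrt ?_)
  calc (∑ i, p i * a i) ^ 2 ≤ (∑ i, p i) * ∑ i, p i * a i ^ 2 :=
        sum_sq_le_sum_mul_sum_of_sq_le_mul _ (fun i _ => hp i)
          (fun i _ => mul_nonneg (hp i) (sq_nonneg _)) (fun i _ => (by ring : _ = _).le)
    _ = ∑ i, p i * a i ^ 2 := by rw [hps, one_mul]

theorem meanTraceDist_le_sqrt_meanSquaredHS_general (d N : ℕ)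
    (ρ : Fin N → Matrix (Fin d) (Fin d) ℂ)
    (p : Fin N → ℝ) (hp : ∀ i, 0 ≤ p i) (hps : ∑ i, p i = 1)
    (ρbar : Matrix (Fin d) (Fin d) ℂ) (hbar : ρbar = ∑ i, (p i : ℂ) • ρ i) :
    ∑ i, p i * DTr (ρ i) ρbar
      ≤ (Real.sqrt d / (2 * Real.sqrt 2)) *
        Real.sqrt (∑ i, ∑ j, p i * p j * (DHS (ρ i) (ρ j)) ^ 2) := by
  have hvariance : ∑ i, p i * DHS (ρ i) ρbar ^ 2
      = (∑ i, ∑ j, p i * p j * DHS (ρ i) (ρ j) ^ 2) / 2 := by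
    simp only [DHS_eq_norm_sub, hbar, map_sum, map_smul]
    exact sum_mul_norm_sub_sum_smul_sq _ p hps
  calc ∑ i, p i * DTr (ρ i) ρbar ≤ ∑ i, p i * (√d / 2 * DHS (ρ i) ρbar) :=
        sum_le_sum fun i _ => mul_le_mul_of_nonneg_left (DTr_le_sqrt_mul_DHS _ _) (hp i)
    _ = √d / 2 * ∑ i, p i * DHS (ρ i) ρbar := by
        rw [mul_sum]
        exact sum_congr rfl fun _ _ => by ring
    _ ≤ √d / 2 * √(∑ i, p i * DHS (ρ i) ρbar ^ 2) := by
        gcongr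
        exact sum_mul_le_sqrt_sum_mul_sq p _ hp hps
    _ = √d / (2 * √2) * √(∑ i, ∑ j, p i * p j * DHS (ρ i) (ρ j) ^ 2) := by
        rw [hvariance, Real.sqrt_div' _ zero_le_two]
        ring

/-- `Σᵢ pᵢ D_Tr(ρᵢ, ρ̄) ≤ (√d/(2√2)) · (Σᵢⱼ pᵢ pⱼ D_HS(ρᵢ,ρⱼ)²)^{1/2}`. -/
theorem meanTraceDist_le_sqrt_meanSquaredHS (d N : ℕ)
    (ρ : Fin N → Matrix (Fin d) (Fin d) ℂ)
    (hρ : ∀ i, (ρ i).PosSemidef ∧ (ρ i).trace = 1)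
    (p : Fin N → ℝ) (hp : ∀ i, 0 ≤ p i) (hps : ∑ i, p i = 1)
    (ρbar : Matrix (Fin d) (Fin d) ℂ) (hbar : ρbar = ∑ i, (p i : ℂ) • ρ i) :
    ∑ i, p i * DTr (ρ i) ρbar
      ≤ (Real.sqrt d / (2 * Real.sqrt 2)) *
        Real.sqrt (∑ i, ∑ j, p i * p j * (DHS (ρ i) (ρ j)) ^ 2) :=
  meanTraceDist_le_sqrt_meanSquaredHS_general d N ρ p hp hps ρbar hbar
end

section
/- Let ρ_1, …, ρ_N be density matrices on ℂ^d and let p ∈ ℝ^N be a probability vector (p_i ≥ 0, Σ_i p_i = 1). Then the sum over all triples of pairwise distinct indices satisfies Σ_{i≠j≠k, all distinct} p_i p_j p_k Re(Tr[ρ_i ρ_j ρ_k]) ≤ 2 Σ_{i≠j} p_i p_j (1 − p_i − p_j) Tr[ρ_i ρ_j²]. -/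
open Matrix Finset
open scoped ComplexOrder

/-!
For Hermitian `A`, `C` and positive semidefinite `B`, expanding `0 ≤ Re Tr[B (A - C)²]` gives
`Re Tr[A B C] ≤ (Re Tr[B A²] + Re Tr[B C²]) / 2`. Weighting by `pᵢ pⱼ p_k` and summing over
distinct triples, the two halves agree by the symmetry `i ↔ k`, and summing out `k` leaves the
factor `1 - pᵢ - pⱼ`. This proves the inequality without the factor `2`; the right-hand side is
nonnegative, so the factor `2` only weakens it.
-/

namespace Finset

variable {ι M : Type*} [DecidableEq ι]

lemma sum_sum_erase_comm [AddCommMonoid M] (s : Finset ι) (f : ι → ι → M) :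
    ∑ i ∈ s, ∑ j ∈ s.erase i, f i j = ∑ j ∈ s, ∑ i ∈ s.erase j, f i j :=
  sum_comm' fun i j => by simp only [mem_erase]; tauto

lemma sum_sum_erase_sum_erase_eq_middle [AddCommMonoid M] (s : Finset ι) (f : ι → ι → ι → M) :
    ∑ i ∈ s, ∑ j ∈ s.erase i, ∑ k ∈ (s.erase i).erase j, f i j k
      = ∑ j ∈ s, ∑ i ∈ s.erase j, ∑ k ∈ (s.erase j).erase i, f i j k := by
  rw [sum_sum_erase_comm]
  simp only [erase_right_comm]

lemma sum_sum_erase_sum_erase_comm [AddCommMonoid M] (s : Finset ι) (f : ι → ι → ι → M) :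
    ∑ i ∈ s, ∑ j ∈ s.erase i, ∑ k ∈ (s.erase i).erase j, f i j k
      = ∑ i ∈ s, ∑ j ∈ s.erase i, ∑ k ∈ (s.erase i).erase j, f k j i := by
  rw [sum_sum_erase_sum_erase_eq_middle s f,
    sum_sum_erase_sum_erase_eq_middle s fun i j k => f k j i]
  exact sum_congr rfl fun j _ => sum_sum_erase_comm _ _

lemma sum_erase_erase_eq_sub [AddCommGroup M] {s : Finset ι} {i j : ι} (hi : i ∈ s) (hj : j ∈ s)
    (hji : j ≠ i) (f : ι → M) :
    ∑ k ∈ (s.erase i).erase j, f k = ∑ k ∈ s, f k - f i - f j := by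
  rw [sum_erase_eq_sub (mem_erase.mpr ⟨hji, hj⟩), sum_erase_eq_sub hi]

lemma sum_sum_erase_sum_erase_mul_eq {R : Type*} [CommRing R] [Fintype ι] {p : ι → R}
    (hp : ∑ i, p i = 1) (g : ι → ι → R) :
    ∑ i, ∑ j ∈ univ.erase i, ∑ k ∈ (univ.erase i).erase j, p i * p j * p k * g i j
      = ∑ i, ∑ j ∈ univ.erase i, p i * p j * (1 - p i - p j) * g i j := by
  refine sum_congr rfl fun i _ => sum_congr rfl fun j hj => ?_
  rw [← sum_mul, ← mul_sum, sum_erase_erase_eq_sub (mem_univ i) (mem_univ j) (ne_of_mem_erase hj),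
    hp]

lemma one_sub_sub_nonneg_of_sum_eq_one [Fintype ι] {p : ι → ℝ} (hp : ∀ i, 0 ≤ p i)
    (hps : ∑ i, p i = 1) {i j : ι} (hji : j ≠ i) : 0 ≤ 1 - p i - p j := by
  rw [← hps, ← sum_erase_erase_eq_sub (mem_univ i) (mem_univ j) hji]
  exact sum_nonneg fun k _ => hp k

end Finset

namespace Matrix

variable {n 𝕜 : Type*} [Fintype n] [RCLike 𝕜]

lemma PosSemidef.re_trace_mul_mul_self_nonneg {A B : Matrix n n 𝕜} (hA : A.PosSemidef)
    (hB : B.IsHermitian) : 0 ≤ RCLike.re (A * (B * B)).trace := by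
  have h := (hA.mul_mul_conjTranspose_same B).trace_nonneg
  rw [hB.eq, trace_mul_cycle, trace_mul_comm] at h
  exact (RCLike.nonneg_iff.mp h).1

lemma re_trace_mul_mul_le {A B C : Matrix n n 𝕜} (hA : A.IsHermitian) (hB : B.PosSemidef)
    (hC : C.IsHermitian) :
    RCLike.re (A * B * C).trace
      ≤ (RCLike.re (B * (A * A)).trace + RCLike.re (B * (C * C)).trace) / 2 := by
  have hsq := hB.re_trace_mul_mul_self_nonneg (hA.sub hC)
  have hcycle : (A * B * C).trace = (B * (C * A)).trace := by
    rw [mul_assoc, trace_mul_comm, mul_assoc]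
  have hconj : (B * (A * C)).trace = star (B * (C * A)).trace := by
    rw [← trace_conjTranspose, conjTranspose_mul, conjTranspose_mul, hA.eq, hB.1.eq, hC.eq,
      trace_mul_comm, mul_assoc]
  simp only [sub_mul, mul_sub, trace_sub, map_sub, hconj, RCLike.star_def, RCLike.conj_re] at hsq
  rw [hcycle]
  linarith

theorem sum_distinct_triples_re_trace_le {ι : Type*} [Fintype ι] [DecidableEq ι]
    (ρ : ι → Matrix n n 𝕜) (hρ : ∀ i, (ρ i).PosSemidef) (p : ι → ℝ) (hp : ∀ i, 0 ≤ p i)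
    (hps : ∑ i, p i = 1) :
    ∑ i, ∑ j ∈ univ.erase i, ∑ k ∈ (univ.erase i).erase j,
        p i * p j * p k * RCLike.re (ρ i * ρ j * ρ k).trace
      ≤ ∑ i, ∑ j ∈ univ.erase i,
          p i * p j * (1 - p i - p j) * RCLike.re (ρ i * (ρ j * ρ j)).trace := by
  set T : ι → ι → ℝ := fun i j => RCLike.re (ρ i * (ρ j * ρ j)).trace
  have hswap : ∑ i, ∑ j ∈ univ.erase i, ∑ k ∈ (univ.erase i).erase j, p i * p j * p k * T j k
      = ∑ i, ∑ j ∈ univ.erase i, ∑ k ∈ (univ.erase i).erase j, p i * p j * p k * T j i := by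
    rw [sum_sum_erase_sum_erase_comm]
    exact sum_congr rfl fun i _ => sum_congr rfl fun j _ => sum_congr rfl fun k _ => by ring
  calc _ ≤ ∑ i, ∑ j ∈ univ.erase i, ∑ k ∈ (univ.erase i).erase j,
          (p i * p j * p k * T j i + p i * p j * p k * T j k) / 2 := by
        refine sum_le_sum fun i _ => sum_le_sum fun j _ => sum_le_sum fun k _ => ?_
        rw [← mul_add, mul_div_assoc]
        exact mul_le_mul_of_nonneg_left (re_trace_mul_mul_le (hρ i).isHermitian (hρ j)
          (hρ k).isHermitian) (mul_nonneg (mul_nonneg (hp i) (hp j)) (hp k))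
    _ = ∑ i, ∑ j ∈ univ.erase i, p i * p j * (1 - p i - p j) * T j i := by
        simp only [← sum_div, sum_add_distrib, hswap, add_self_div_two]
        exact sum_sum_erase_sum_erase_mul_eq hps fun i j => T j i
    _ = _ := by
        rw [sum_sum_erase_comm]
        exact sum_congr rfl fun i _ => sum_congr rfl fun j _ => by ring

end Matrix

/-- For density matrices `ρ₁, …, ρ_N` and a probability vector `p`,
`Σ_{i≠j≠k distinct} pᵢ pⱼ p_k Re Tr[ρᵢ ρⱼ ρ_k] ≤ 2 Σ_{i≠j} pᵢ pⱼ (1 − pᵢ − pⱼ) Tr[ρᵢ ρⱼ²]`. -/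
theorem triple_trace_sum_le (d N : ℕ) (ρ : Fin N → Matrix (Fin d) (Fin d) ℂ)
    (hρ : ∀ i, (ρ i).PosSemidef ∧ (ρ i).trace = 1)
    (p : Fin N → ℝ) (hp : ∀ i, 0 ≤ p i) (hps : ∑ i, p i = 1) :
    ∑ i, ∑ j ∈ univ.erase i, ∑ k ∈ (univ.erase i).erase j,
        p i * p j * p k * ((ρ i * ρ j * ρ k).trace).re
      ≤ 2 * ∑ i, ∑ j ∈ univ.erase i,
          p i * p j * (1 - p i - p j) * ((ρ i * (ρ j * ρ j)).trace).re := by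
  have hRHS : 0 ≤ ∑ i, ∑ j ∈ univ.erase i,
      p i * p j * (1 - p i - p j) * ((ρ i * (ρ j * ρ j)).trace).re :=
    sum_nonneg fun i _ => sum_nonneg fun j hj =>
      mul_nonneg (mul_nonneg (mul_nonneg (hp i) (hp j))
          (one_sub_sub_nonneg_of_sum_eq_one hp hps (ne_of_mem_erase hj)))
        ((hρ i).1.re_trace_mul_mul_self_nonneg (hρ j).1.isHermitian)
  exact (sum_distinct_triples_re_trace_le ρ (fun i => (hρ i).1) p hp hps).trans
    (le_mul_of_one_le_left hRHS one_le_two)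
end

section
/- Let ρ_1, …, ρ_N be density matrices on ℂ^d, let p ∈ ℝ^N be a probability vector with p_i > 0 for all i, and let μ > 0. For m = (m_1, …, m_N) ∈ ℕ^N define D(m) = Σ_{i≠j} [ (m_i(m_i−1) p_j / (μ² p_i)) Tr[ρ_i²] + (m_j(m_j−1) p_i / (μ² p_j)) Tr[ρ_j²] − (2 m_i m_j / μ²) Tr[ρ_i ρ_j] ]. Then the expectation of D(m) when the coordinates m_i are independent Poisson random variables with respective means p_i μ equals the mean squared Hilbert–Schmidt distance: Σ_{m ∈ ℕ^N} ( ∏_{i=1}^N e^{−p_i μ}(p_i μ)^{m_i} / m_i! ) · D(m) = Σ_{i=1}^N Σ_{j=1}^N p_i p_j Tr[(ρ_i − ρ_j)²]. -/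
/-!
Under independent Poisson sampling `mₖ ∼ Poi(rₖ)` the factorial moments factor,
`E[∏ₖ mₖ(mₖ - 1)⋯(mₖ - cₖ + 1)] = ∏ₖ rₖ ^ cₖ`; in particular `E[mᵢ(mᵢ - 1)] = rᵢ²` and
`E[mᵢ mⱼ] = rᵢ rⱼ` for `i ≠ j`. With `rₖ = pₖ μ` the `(i, j)` summand of `D(m)` therefore has
expectation `pᵢ pⱼ (Tr ρᵢ² + Tr ρⱼ² - 2 Tr ρᵢρⱼ) = pᵢ pⱼ Tr[(ρᵢ - ρⱼ)²]`, and the diagonal terms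
missing from `D` vanish on the right-hand side.
-/

open Matrix Finset
open scoped ComplexOrder Nat

/-- `ProbabilityTheory.poissonPMFReal` with the rate in `ℝ` rather than `ℝ≥0`. -/
noncomputable def poissonWeight (r : ℝ) (n : ℕ) : ℝ := Real.exp (-r) * r ^ n / n !

lemma poissonWeight_nonneg {r : ℝ} (hr : 0 ≤ r) (n : ℕ) : 0 ≤ poissonWeight r n := by
  unfold poissonWeight
  positivity

lemma hasSum_poissonWeight (r : ℝ) : HasSum (poissonWeight r) 1 := by
  unfold poissonWeight
  have h := (NormedSpace.expSeries_div_hasSum_exp r).mul_left (Real.exp (-r))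
  rw [← Real.exp_eq_exp_ℝ, ← Real.exp_add, neg_add_cancel, Real.exp_zero] at h
  simpa only [mul_div_assoc] using h

lemma poissonWeight_add_mul_descFactorial (r : ℝ) (n k : ℕ) :
    poissonWeight r (n + k) * (n + k).descFactorial k = r ^ k * poissonWeight r n := by
  have hfact : ((n + k)! : ℝ) = n ! * (n + k).descFactorial k := by
    exact_mod_cast (Nat.add_sub_cancel n k ▸
      Nat.factorial_mul_descFactorial (Nat.le_add_left k n)).symm
  have hdesc : ((n + k).descFactorial k : ℝ) ≠ 0 := by
    exact_mod_cast (Nat.descFactorial_pos.2 (Nat.le_add_left k n)).ne'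
  simp only [poissonWeight, hfact]
  field_simp
  ring

lemma hasSum_poissonWeight_mul_descFactorial (r : ℝ) (k : ℕ) :
    HasSum (fun n => poissonWeight r n * n.descFactorial k) (r ^ k) := by
  rw [← hasSum_nat_add_iff' k]
  have hlow : ∑ n ∈ range k, poissonWeight r n * n.descFactorial k = 0 :=
    sum_eq_zero fun n hn => by simp [Nat.descFactorial_of_lt (mem_range.1 hn)]
  simpa [hlow, poissonWeight_add_mul_descFactorial] using (hasSum_poissonWeight r).mul_left (r ^ k)

lemma hasSum_fin_prod_of_nonneg {α : Type*} {n : ℕ} {f : Fin n → α → ℝ} {a : Fin n → ℝ}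
    (hf : ∀ k x, 0 ≤ f k x) (ha : ∀ k, HasSum (f k) (a k)) :
    HasSum (fun m : Fin n → α => ∏ k, f k (m k)) (∏ k, a k) := by
  induction n with
  | zero => simp
  | succ n ih =>
    have htail := ih (fun k => hf k.succ) (fun k => ha k.succ)
    have hsummable := (ha 0).summable.mul_of_nonneg htail.summable (hf 0)
      fun m => prod_nonneg fun k _ => hf k.succ (m k)
    have hprod := (ha 0).mul htail hsummable
    rw [Fin.prod_univ_succ, ← (Fin.consEquiv fun _ => α).hasSum_iff]
    simpa only [Fin.consEquiv, Equiv.coe_fn_mk, Function.comp_def, Fin.prod_univ_succ,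
      Fin.cons_zero, Fin.cons_succ] using hprod

section JointFactorialMoments

variable {N : ℕ} {r : Fin N → ℝ}

lemma hasSum_prod_poissonWeight_mul_prod_descFactorial (hr : ∀ k, 0 ≤ r k) (c : Fin N → ℕ) :
    HasSum (fun m : Fin N → ℕ =>
      (∏ k, poissonWeight (r k) (m k)) * ∏ k, ((m k).descFactorial (c k) : ℝ))
      (∏ k, r k ^ c k) := by
  simpa only [← prod_mul_distrib] using hasSum_fin_prod_of_nonneg
    (fun k n => mul_nonneg (poissonWeight_nonneg (hr k) n) (Nat.cast_nonneg _))
    (fun k => hasSum_poissonWeight_mul_descFactorial (r k) (c k))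

lemma hasSum_prod_poissonWeight_mul_descFactorial_two (hr : ∀ k, 0 ≤ r k) (i : Fin N) :
    HasSum (fun m : Fin N → ℕ =>
      (∏ k, poissonWeight (r k) (m k)) * ((m i : ℝ) * ((m i : ℝ) - 1))) (r i ^ 2) := by
  set c : Fin N → ℕ := Pi.single i 2
  have hc : ∀ k ≠ i, c k = 0 := fun k hk => by simp [c, hk]
  have hci : c i = 2 := Pi.single_eq_same i 2
  have hm (m : Fin N → ℕ) : ∏ k, ((m k).descFactorial (c k) : ℝ) = m i * (m i - 1) := by
    rw [Fintype.prod_eq_single i fun k hk => by simp [hc k hk], hci,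
      Nat.cast_descFactorial_two]
  have h := hasSum_prod_poissonWeight_mul_prod_descFactorial hr c
  rw [Fintype.prod_eq_single i fun k hk => by simp [hc k hk], hci] at h
  simpa only [hm] using h

lemma hasSum_prod_poissonWeight_mul_mul (hr : ∀ k, 0 ≤ r k) {i j : Fin N} (hij : i ≠ j) :
    HasSum (fun m : Fin N → ℕ =>
      (∏ k, poissonWeight (r k) (m k)) * ((m i : ℝ) * m j)) (r i * r j) := by
  set c : Fin N → ℕ := Pi.single i 1 + Pi.single j 1
  have hc : ∀ k, k ≠ i ∧ k ≠ j → c k = 0 := fun k hk => by simp [c, hk.1, hk.2]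
  have hci : c i = 1 := by simp [c, hij]
  have hcj : c j = 1 := by simp [c, hij.symm]
  have hm (m : Fin N → ℕ) : ∏ k, ((m k).descFactorial (c k) : ℝ) = m i * m j := by
    rw [Fintype.prod_eq_mul i j hij fun k hk => by simp [hc k hk], hci, hcj,
      Nat.descFactorial_one, Nat.descFactorial_one]
  have h := hasSum_prod_poissonWeight_mul_prod_descFactorial hr c
  rw [Fintype.prod_eq_mul i j hij fun k hk => by simp [hc k hk], hci, hcj, pow_one, pow_one] at h
  simpa only [hm] using h

end JointFactorialMoments

lemma hasSum_prod_poissonWeight_mul_estimatorTerm {N : ℕ} {p : Fin N → ℝ} {μ : ℝ}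
    (hp : ∀ k, 0 < p k) (hμ : 0 < μ) {i j : Fin N} (hij : i ≠ j) (a b c : ℝ) :
    HasSum (fun m : Fin N → ℕ => (∏ k, poissonWeight (p k * μ) (m k)) *
      (((m i : ℝ) * ((m i : ℝ) - 1) * p j / (μ ^ 2 * p i)) * a
        + ((m j : ℝ) * ((m j : ℝ) - 1) * p i / (μ ^ 2 * p j)) * b
        - (2 * (m i : ℝ) * (m j : ℝ) / μ ^ 2) * c))
      (p i * p j * (a + b - 2 * c)) := by
  have hr : ∀ k, 0 ≤ p k * μ := fun k => (mul_pos (hp k) hμ).le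
  have h := (((hasSum_prod_poissonWeight_mul_descFactorial_two hr i).mul_left
    (p j / (μ ^ 2 * p i) * a)).add ((hasSum_prod_poissonWeight_mul_descFactorial_two hr j).mul_left
    (p i / (μ ^ 2 * p j) * b))).sub ((hasSum_prod_poissonWeight_mul_mul hr hij).mul_left
    (2 / μ ^ 2 * c))
  have hpi := (hp i).ne'
  have hpj := (hp j).ne'
  have hμ' := hμ.ne'
  rw [show p i * p j * (a + b - 2 * c) = p j / (μ ^ 2 * p i) * a * (p i * μ) ^ 2
      + p i / (μ ^ 2 * p j) * b * (p j * μ) ^ 2 - 2 / μ ^ 2 * c * (p i * μ * (p j * μ)) by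
    field_simp]
  exact h.congr_fun fun m => by ring

lemma Matrix.trace_sub_mul_sub {n R : Type*} [Fintype n] [CommRing R] (A B : Matrix n n R) :
    ((A - B) * (A - B)).trace = (A * A).trace + (B * B).trace - 2 * (A * B).trace := by
  simp only [sub_mul, mul_sub, trace_sub, trace_mul_comm B A]
  ring

theorem poissonized_estimator_unbiased_general (d N : ℕ)
    (ρ : Fin N → Matrix (Fin d) (Fin d) ℂ)
    (p : Fin N → ℝ) (hp : ∀ i, 0 < p i)
    (μ : ℝ) (hμ : 0 < μ) :
    (∑' m : Fin N → ℕ,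
      (∏ i, Real.exp (-(p i * μ)) * (p i * μ) ^ (m i) / Nat.factorial (m i)) *
      (∑ i, ∑ j ∈ univ.erase i,
        (((m i : ℝ) * ((m i : ℝ) - 1) * p j / (μ ^ 2 * p i)) * ((ρ i * ρ i).trace).re
          + ((m j : ℝ) * ((m j : ℝ) - 1) * p i / (μ ^ 2 * p j)) * ((ρ j * ρ j).trace).re
          - (2 * (m i : ℝ) * (m j : ℝ) / μ ^ 2) * ((ρ i * ρ j).trace).re)))
    = ∑ i, ∑ j, p i * p j * (((ρ i - ρ j) * (ρ i - ρ j)).trace).re := by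
  simp_rw [mul_sum]
  refine (hasSum_sum fun i _ => hasSum_sum fun j hj =>
    hasSum_prod_poissonWeight_mul_estimatorTerm hp hμ (ne_of_mem_erase hj).symm _ _ _).tsum_eq.trans
    (sum_congr rfl fun i _ => ?_)
  rw [← sum_erase univ (a := i) (by simp)]
  simp only [Matrix.trace_sub_mul_sub, Complex.sub_re, Complex.add_re, Complex.mul_re,
    Complex.re_ofNat, Complex.im_ofNat, zero_mul, sub_zero]

/-- The Poissonized estimator `D(m)` is unbiased for the mean squared
Hilbert–Schmidt distance: averaging
`D(m) = Σ_{i≠j} [ mᵢ(mᵢ−1)pⱼ/(μ²pᵢ) Tr[ρᵢ²] + mⱼ(mⱼ−1)pᵢ/(μ²pⱼ) Tr[ρⱼ²] − (2mᵢmⱼ/μ²) Tr[ρᵢρⱼ] ]`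
over independent Poisson variables `mᵢ ∼ Poi(pᵢμ)` gives `Σᵢⱼ pᵢ pⱼ Tr[(ρᵢ − ρⱼ)²]`. -/
theorem poissonized_estimator_unbiased (d N : ℕ)
    (ρ : Fin N → Matrix (Fin d) (Fin d) ℂ)
    (hρ : ∀ i, (ρ i).PosSemidef ∧ (ρ i).trace = 1)
    (p : Fin N → ℝ) (hp : ∀ i, 0 < p i) (hps : ∑ i, p i = 1)
    (μ : ℝ) (hμ : 0 < μ) :
    (∑' m : Fin N → ℕ,
      (∏ i, Real.exp (-(p i * μ)) * (p i * μ) ^ (m i) / Nat.factorial (m i)) *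
      (∑ i, ∑ j ∈ univ.erase i,
        (((m i : ℝ) * ((m i : ℝ) - 1) * p j / (μ ^ 2 * p i)) * ((ρ i * ρ i).trace).re
          + ((m j : ℝ) * ((m j : ℝ) - 1) * p i / (μ ^ 2 * p j)) * ((ρ j * ρ j).trace).re
          - (2 * (m i : ℝ) * (m j : ℝ) / μ ^ 2) * ((ρ i * ρ j).trace).re)))
    = ∑ i, ∑ j, p i * p j * (((ρ i - ρ j) * (ρ i - ρ j)).trace).re :=
  poissonized_estimator_unbiased_general d N ρ p hp μ hμ
end

section
/- Let d be an even positive integer, let 0 < ε ≤ 1/8, and let N be a positive integer. Let Θ be the diagonal d×d matrix with k-th diagonal entry (−1)^k (k = 1, …, d) and ρ0 = (I_d + 8εΘ)/d. If U_1, …, U_N are drawn independently according to the Haar probability measure on U(d), then E[ (1/N²) Σ_{i=1}^N Σ_{j=1}^N Re Tr[Θ U_iᴴ U_j ρ0 U_jᴴ U_i] ] = 8ε/N. -/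
/-!
Write `f V = Re Tr[Θ V ρ0 Vᴴ]`, so that the `(i, j)` summand is `f (Uᵢ⁻¹ Uⱼ)`. On the diagonal it
is `f 1 = Tr[Θ ρ0] = 8ε`, because `Θ² = 1` and `Tr Θ = 0`. Off the diagonal `Uᵢ⁻¹ Uⱼ` is again Haar
distributed (the shear `(x, y) ↦ (x, x⁻¹y)` preserves `μ ⊗ μ`), and the Haar mean of `f` vanishes:
for even `d` the cyclic shift `W` satisfies `Wᴴ Θ W = -Θ`, so left translation by `W` negates `f`.
Only the `N` diagonal terms survive, and `N · 8ε / N² = 8ε / N`.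
-/

open Matrix Finset MeasureTheory
open scoped ComplexOrder

/-- The diagonal matrix `Θ` whose `k`-th diagonal entry is `(−1)^k`, `k = 1, …, d`
(index `k : Fin d` corresponds to the `(k+1)`-st entry). -/
noncomputable def Theta (d : ℕ) : Matrix (Fin d) (Fin d) ℂ :=
  Matrix.diagonal fun k => (-1 : ℂ) ^ ((k : ℕ) + 1)

/-- The state `ρ0 = (I_d + 8 ε Θ)/d`. -/
noncomputable def rho0 (d : ℕ) (ε : ℝ) : Matrix (Fin d) (Fin d) ℂ :=
  ((d : ℂ))⁻¹ • (1 + ((8 * ε : ℝ) : ℂ) • Theta d)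

namespace Matrix

instance {m n R : Type*} [Fintype m] [Fintype n] [TopologicalSpace R] [SecondCountableTopology R] :
    SecondCountableTopology (Matrix m n R) :=
  inferInstanceAs (SecondCountableTopology (m → n → R))

instance {n 𝕜 : Type*} [Fintype n] [DecidableEq n] [RCLike 𝕜] :
    CompactSpace (unitaryGroup n 𝕜) := by
  refine isCompact_iff_compactSpace.mp <|
    (isCompact_univ_pi fun _ ↦ isCompact_univ_pi fun _ ↦ isCompact_closedBall (0 : 𝕜) 1)
      |>.of_isClosed_subset (isClosed_unitary (R := Matrix n n 𝕜)) fun U hU i _ j _ ↦ ?_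
  simpa using entry_norm_bound_of_unitary hU i j

instance {n R : Type*} [Fintype n] [DecidableEq n] [CommRing R] [StarRing R] [TopologicalSpace R]
    [SecondCountableTopology R] : SecondCountableTopology (unitaryGroup n R) :=
  TopologicalSpace.Subtype.secondCountableTopology (unitaryGroup n R : Set (Matrix n n R))

variable {n R : Type*} [Fintype n] [DecidableEq n]

lemma permMatrix_mem_unitaryGroup [CommRing R] [StarRing R] (σ : Equiv.Perm n) :
    σ.permMatrix R ∈ unitaryGroup n R := by
  rw [mem_unitaryGroup_iff', star_eq_conjTranspose, conjTranspose_permMatrix, ← permMatrix_mul,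
    mul_inv_cancel, permMatrix_one]

lemma conjTranspose_permMatrix_mul_diagonal_mul_permMatrix [CommRing R] [StarRing R]
    (σ : Equiv.Perm n) (v : n → R) :
    (σ.permMatrix R)ᴴ * diagonal v * σ.permMatrix R = diagonal fun i ↦ v (σ⁻¹ i) := by
  rw [conjTranspose_permMatrix, PEquiv.toMatrix_toPEquiv_mul, PEquiv.mul_toMatrix_toPEquiv,
    submatrix_submatrix, Function.comp_id, Function.id_comp, ← Equiv.Perm.inv_def,
    submatrix_diagonal_equiv]
  rfl

lemma trace_eq_zero_of_conjTranspose_mul_mul_eq_neg [CommRing R] [StarRing R] [NoZeroDivisors R]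
    [CharZero R] {A W : Matrix n n R} (hW : W ∈ unitaryGroup n R) (hA : Wᴴ * A * W = -A) :
    A.trace = 0 := by
  have h := congrArg trace hA
  rw [trace_mul_cycle, ← star_eq_conjTranspose, mem_unitaryGroup_iff.mp hW, one_mul,
    trace_neg] at h
  exact CharZero.eq_neg_self_iff.mp h

end Matrix

lemma Theta_mul_self (d : ℕ) : Theta d * Theta d = 1 := by
  simp [Theta, diagonal_mul_diagonal, ← pow_add, ← two_mul]

lemma conjTranspose_permMatrix_finRotate_mul_Theta {d : ℕ} (hd : Even d) :
    ((finRotate d)⁻¹.permMatrix ℂ)ᴴ * Theta d * (finRotate d)⁻¹.permMatrix ℂ = -Theta d := by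
  rw [Theta, conjTranspose_permMatrix_mul_diagonal_mul_permMatrix, diagonal_neg, inv_inv]
  congr 1
  ext k
  cases d with
  | zero => exact k.elim0
  | succ d =>
    rw [coe_finRotate]
    split_ifs with hk
    · simp [hk, hd.neg_one_pow]
    · ring

lemma trace_Theta_mul_rho0 {d : ℕ} (hd : d ≠ 0) (hde : Even d) (ε : ℝ) :
    (Theta d * rho0 d ε).trace = 8 * ε := by
  have : (Theta d).trace = 0 := trace_eq_zero_of_conjTranspose_mul_mul_eq_neg
    (permMatrix_mem_unitaryGroup _) (conjTranspose_permMatrix_finRotate_mul_Theta hde)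
  rw [rho0, Matrix.mul_smul, mul_add, mul_one, Matrix.mul_smul, Theta_mul_self, trace_smul,
    trace_add, this, trace_smul, trace_one, Fintype.card_fin, smul_eq_mul, zero_add, smul_eq_mul]
  push_cast
  field_simp

lemma MeasureTheory.Measure.map_pi_eval_inv_mul {G ι : Type*} [Group G] [MeasurableSpace G]
    [MeasurableMul₂ G] [MeasurableInv G] (μ : Measure G) [IsProbabilityMeasure μ]
    [μ.IsMulLeftInvariant] [Fintype ι] [DecidableEq ι] {i j : ι} (hij : i ≠ j) :
    (Measure.pi fun _ : ι ↦ μ).map (fun U ↦ (U i)⁻¹ * U j) = μ := by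
  have hpair : (Measure.pi fun _ : ι ↦ μ).map (fun U ↦ (U i, U j)) = μ.prod μ := by
    rw [← Measure.infinitePi_eq_pi, Measure.infinitePi_map_eval_prod hij]
  calc (Measure.pi fun _ : ι ↦ μ).map (fun U ↦ (U i)⁻¹ * U j)
      = ((μ.prod μ).map fun p ↦ (p.1, p.1⁻¹ * p.2)).map Prod.snd := by
        rw [← hpair, Measure.map_map (by fun_prop) (by fun_prop),
          Measure.map_map (by fun_prop) (by fun_prop)]
        rfl
    _ = μ := by
      rw [(measurePreserving_prod_inv_mul μ μ).map_eq, Measure.map_snd_prod, measure_univ,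
        one_smul]

lemma integral_re_trace_mul_conj_eq_zero {n : Type*} [Fintype n] [DecidableEq n]
    [MeasurableSpace (unitaryGroup n ℂ)] [BorelSpace (unitaryGroup n ℂ)]
    (μ : Measure (unitaryGroup n ℂ)) [μ.IsMulLeftInvariant] {A W : Matrix n n ℂ}
    (hW : W ∈ unitaryGroup n ℂ) (hA : Wᴴ * A * W = -A) (B : Matrix n n ℂ) :
    ∫ V : unitaryGroup n ℂ, (A * V * B * (V : Matrix n n ℂ)ᴴ).trace.re ∂μ = 0 := by
  refine integral_eq_zero_of_mul_left_eq_neg (g := ⟨W, hW⟩) fun V ↦ ?_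
  have cyclic : (A * (W * V) * B * (W * V : Matrix n n ℂ)ᴴ).trace
      = (Wᴴ * A * W * V * B * (V : Matrix n n ℂ)ᴴ).trace := by
    calc _ = (A * W * V * B * (V : Matrix n n ℂ)ᴴ * Wᴴ).trace := by
          simp only [conjTranspose_mul, Matrix.mul_assoc]
      _ = _ := by
          rw [trace_mul_comm]
          simp only [Matrix.mul_assoc]
  rw [Submonoid.coe_mul, cyclic, hA, neg_mul, neg_mul, neg_mul, trace_neg, Complex.neg_re]

theorem expectation_cross_term_general (d N : ℕ) (hd : 0 < d) (hdeven : Even d)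
    (ε : ℝ)
    [MeasurableSpace (Matrix.unitaryGroup (Fin d) ℂ)]
    [BorelSpace (Matrix.unitaryGroup (Fin d) ℂ)]
    (μ : Measure (Matrix.unitaryGroup (Fin d) ℂ))
    [μ.IsHaarMeasure] [IsProbabilityMeasure μ] :
    (∫ U : Fin N → Matrix.unitaryGroup (Fin d) ℂ,
        ((N : ℝ) ^ 2)⁻¹ *
          ∑ i, ∑ j, ((Theta d * (U i : Matrix (Fin d) (Fin d) ℂ)ᴴ *
            (U j : Matrix (Fin d) (Fin d) ℂ) * rho0 d ε *
            (U j : Matrix (Fin d) (Fin d) ℂ)ᴴ * (U i : Matrix (Fin d) (Fin d) ℂ)).trace).re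
        ∂(Measure.pi fun _ : Fin N => μ))
      = 8 * ε / N := by
  set f : unitaryGroup (Fin d) ℂ → ℝ := fun V ↦
    (Theta d * V * rho0 d ε * (V : Matrix (Fin d) (Fin d) ℂ)ᴴ).trace.re with hf
  have hf_cont : Continuous f := by fun_prop
  have cross_term_eq (i j : Fin N) (U : Fin N → unitaryGroup (Fin d) ℂ) :
      (Theta d * (U i : Matrix (Fin d) (Fin d) ℂ)ᴴ * U j * rho0 d ε *
        (U j : Matrix (Fin d) (Fin d) ℂ)ᴴ * U i).trace.re = f ((U i)⁻¹ * U j) := by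
    simp [hf, Matrix.mul_assoc, Matrix.star_eq_conjTranspose]
  have integral_cross_term (i j : Fin N) :
      ∫ U, f ((U i)⁻¹ * U j) ∂(Measure.pi fun _ : Fin N => μ) = if i = j then 8 * ε else 0 := by
    split_ifs with hij
    · subst hij
      simp [hf, trace_Theta_mul_rho0 hd.ne' hdeven]
    · rw [← integral_map (by fun_prop) hf_cont.aestronglyMeasurable,
        Measure.map_pi_eval_inv_mul μ hij]
      exact integral_re_trace_mul_conj_eq_zero μ (permMatrix_mem_unitaryGroup _)
        (conjTranspose_permMatrix_finRotate_mul_Theta hdeven) _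
  have hint (i j : Fin N) : Integrable (fun U : Fin N → unitaryGroup (Fin d) ℂ ↦ f ((U i)⁻¹ * U j))
      (Measure.pi fun _ ↦ μ) :=
    (hf_cont.comp (by fun_prop)).integrable_of_hasCompactSupport
      (HasCompactSupport.of_compactSpace _)
  simp_rw [cross_term_eq, integral_const_mul,
    integral_finsetSum _ fun i _ ↦ integrable_finsetSum _ fun j _ ↦ hint i j,
    integral_finsetSum _ fun j _ ↦ hint _ j, integral_cross_term]
  simp only [Finset.sum_ite_eq, Finset.mem_univ, if_true, Finset.sum_const, Finset.card_univ,
    Fintype.card_fin, nsmul_eq_mul]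
  rw [← mul_assoc, ← div_eq_inv_mul, sq, div_self_mul_self', inv_mul_eq_div]

/-- For `U₁, …, U_N` i.i.d. Haar unitaries,
`E[(1/N²) Σᵢⱼ Re Tr[Θ Uᵢᴴ Uⱼ ρ0 Uⱼᴴ Uᵢ]] = 8ε/N`. -/
theorem expectation_cross_term (d N : ℕ) (hd : 0 < d) (hdeven : Even d) (hN : 0 < N)
    (ε : ℝ) (hε : 0 < ε) (hε8 : ε ≤ 1 / 8)
    [MeasurableSpace (Matrix.unitaryGroup (Fin d) ℂ)]
    [BorelSpace (Matrix.unitaryGroup (Fin d) ℂ)]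
    (μ : Measure (Matrix.unitaryGroup (Fin d) ℂ))
    [μ.IsHaarMeasure] [IsProbabilityMeasure μ] :
    (∫ U : Fin N → Matrix.unitaryGroup (Fin d) ℂ,
        ((N : ℝ) ^ 2)⁻¹ *
          ∑ i, ∑ j, ((Theta d * (U i : Matrix (Fin d) (Fin d) ℂ)ᴴ *
            (U j : Matrix (Fin d) (Fin d) ℂ) * rho0 d ε *
            (U j : Matrix (Fin d) (Fin d) ℂ)ᴴ * (U i : Matrix (Fin d) (Fin d) ℂ)).trace).re
        ∂(Measure.pi fun _ : Fin N => μ))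
      = 8 * ε / N :=
  expectation_cross_term_general d N hd hdeven ε μ
end
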